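/- arXiv:2101.03540 — 9 statements merged into one kernel-verified Lean document; each statement's English description precedes it below -/
import Mathlib

section
/- Define Ψ_u(u,v) = sgn(u)(|u|-|v|) if |u|>β|v|, and Ψ_u(u,v) = u³/(2β²v²) + (1/2 - 1/β)u if |u|≤β|v| (v≠0). Then Ψ_u(u,v)·u ≥ u² - |uv| for all u∈ℝ and v≠0, where 0<β≤1. -/
theorem Psi_u_mul_u_lower_bound (β : ℝ) (hβ0 : 0 < β) (hβ1 : β ≤ 1) (u v : ℝ) (hv : v ≠ 0) :
    (if |u| > β * |v| then Real.sign u * (|u| - |v|)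
      else u ^ 3 / (2 * β ^ 2 * v ^ 2) + (1 / 2 - 1 / β) * u) * u ≥ u ^ 2 - |u * v| := by
  have hvpos : 0 < |v| := abs_pos.mpr hv
  have hv2 : (0:ℝ) < v ^ 2 := by positivity
  rw [abs_mul]
  split_ifs with h
  · -- |u| > β|v| > 0, so u ≠ 0
    have hu : u ≠ 0 := by
      intro h0
      rw [h0, abs_zero] at h
      nlinarith
    rcases lt_or_gt_of_ne hu with h1 | h1
    · rw [Real.sign_of_neg h1]
      rw [abs_of_neg h1]
      nlinarith
    · rw [Real.sign_of_pos h1]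
      rw [abs_of_pos h1]
      nlinarith
  · push_neg at h
    have hbne : β ≠ 0 := ne_of_gt hβ0
    have key : (u ^ 3 / (2 * β ^ 2 * v ^ 2) + (1 / 2 - 1 / β) * u) * u
        = (u ^ 4 + (β ^ 2 - 2 * β) * u ^ 2 * v ^ 2) / (2 * β ^ 2 * v ^ 2) := by
      field_simp
    rw [key, ge_iff_le, le_div_iff₀ (by positivity)]
    have h2 : v ^ 2 = |v| ^ 2 := (sq_abs v).symm
    have h3 : u ^ 2 = |u| ^ 2 := (sq_abs u).symm
    have h4 : u ^ 4 = |u| ^ 4 := by rw [show u ^ 4 = (u ^ 2) ^ 2 by ring, h3]; ring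
    have habs : 0 ≤ |u| := abs_nonneg u
    have hf1 : 0 ≤ β * |v| - |u| := by linarith
    have hf2 : 0 ≤ 2 * β * |v| ^ 2 - |u| ^ 2 - β * |v| * |u| := by
      nlinarith [mul_nonneg hf1 (by positivity : (0:ℝ) ≤ 2 * β * |v| + |u|),
        mul_nonneg (mul_nonneg (sub_nonneg.mpr hβ1) hβ0.le) (sq_nonneg |v|)]
    rw [h2, h3, h4]
    nlinarith [mul_nonneg habs (mul_nonneg hf1 hf2)]
end

section
/- Let V,W be independent standard normal random variables, σ∈[0,1), τ=√(1-σ²), and U=σV+τW. Then E[sgn(UV)·V²] = (2/π)(τσ + arctan(σ/τ)). -/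
/-!
Write `σ = sin β` with `β = arcsin σ ∈ [0, π/2)`, so that `√(1 - σ²) = cos β` and
`arctan (σ / √(1 - σ²)) = β`. In polar coordinates `(V, W) = (r cos θ, r sin θ)` one has
`U V = r² cos θ sin (θ + β)`, so the integrand separates into the radial factor
`r³ e^{-r²/2}`, whose integral is `2`, and the angular factor `sign (cos θ sin (θ + β)) cos² θ`.
On `(-π, π)` the sign changes only at `-π/2, -β, π/2, π - β`, and integrating `cos²` over the
five pieces gives `2β + 2 sin β cos β`.
-/

open Real MeasureTheory Set intervalIntegral

theorem Real.sign_mul_of_pos_left {c : ℝ} (hc : 0 < c) (t : ℝ) : sign (c * t) = sign t := by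
  rcases lt_trichotomy t 0 with ht | rfl | ht
  · rw [sign_of_neg ht, sign_of_neg (mul_neg_of_pos_of_neg hc ht)]
  · simp
  · rw [sign_of_pos ht, sign_of_pos (mul_pos hc ht)]

theorem integral_eq_mul_of_polarCoord_separable {F : ℝ × ℝ → ℝ} (f g : ℝ → ℝ)
    (hF : ∀ r > 0, ∀ θ, F (r * cos θ, r * sin θ) = f r * g θ) :
    ∫ p, F p = (∫ r in Ioi 0, r * f r) * ∫ θ in -π..π, g θ := by
  rw [← integral_comp_polarCoord_symm, integral_of_le (by linarith [pi_pos]),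
    integral_Ioc_eq_integral_Ioo, ← integral_prod_mul, Measure.prod_restrict,
    ← Measure.volume_eq_prod]
  refine setIntegral_congr_fun polarCoord.open_target.measurableSet fun p hp => ?_
  rw [polarCoord_symm_apply, smul_eq_mul, hF p.1 hp.1, mul_assoc]

theorem integral_Ioi_pow_three_mul_exp_neg_sq_div_two :
    ∫ r in Ioi (0 : ℝ), r ^ 3 * exp (-r ^ 2 / 2) = 2 := by
  calc ∫ r in Ioi (0 : ℝ), r ^ 3 * exp (-r ^ 2 / 2)
      = ∫ r in Ioi (0 : ℝ), r ^ (3 : ℝ) * exp (-(1 / 2) * r ^ (2 : ℝ)) :=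
        setIntegral_congr_fun measurableSet_Ioi fun r _ => by norm_cast; ring_nf
    _ = 2 := by
        rw [integral_rpow_mul_exp_neg_mul_rpow (by norm_num) (by norm_num) (by norm_num)]
        norm_num [Gamma_two]

theorem intervalIntegrable_mul_of_eqOn_Ioo {s g : ℝ → ℝ} {a b ε : ℝ} (hab : a ≤ b)
    (hs : EqOn s (fun _ => ε) (Ioo a b)) (hg : IntervalIntegrable g volume a b) :
    IntervalIntegrable (fun x => s x * g x) volume a b :=
  (hg.const_mul ε).congr_uIoo fun x hx => by
    rw [uIoo_of_le hab] at hx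
    simp [hs hx]

theorem integral_mul_of_eqOn_Ioo {s g : ℝ → ℝ} {a b ε : ℝ} (hab : a ≤ b)
    (hs : EqOn s (fun _ => ε) (Ioo a b)) :
    ∫ x in a..b, s x * g x = ε * ∫ x in a..b, g x := by
  rw [← intervalIntegral.integral_const_mul]
  exact integral_congr_Ioo_of_le hab fun x hx => by simp [hs hx]

theorem integral_sign_cos_mul_sin_add_mul_cos_sq {β : ℝ} (hβ0 : 0 ≤ β) (hβ1 : β ≤ π / 2) :
    ∫ θ in -π..π, sign (cos θ * sin (θ + β)) * cos θ ^ 2 = 2 * β + 2 * sin β * cos β := by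
  have hπ := pi_pos
  set s := fun θ => sign (cos θ * sin (θ + β))
  have piece : ∀ a b ε : ℝ, a ≤ b → EqOn s (fun _ => ε) (Ioo a b) →
      IntervalIntegrable (fun θ => s θ * cos θ ^ 2) volume a b ∧
        ∫ θ in a..b, s θ * cos θ ^ 2 = ε * ((cos b * sin b - cos a * sin a + b - a) / 2) :=
    fun a b ε hab hs => ⟨intervalIntegrable_mul_of_eqOn_Ioo hab hs
      ((continuous_cos.pow 2).intervalIntegrable _ _),
      by rw [integral_mul_of_eqOn_Ioo hab hs, integral_cos_sq]⟩
  obtain ⟨i1, e1⟩ := piece (-π) (-(π / 2)) 1 (by linarith) fun θ ⟨h1, h2⟩ => by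
    have hc : cos θ < 0 := by
      rw [← cos_neg]; exact cos_neg_of_pi_div_two_lt_of_lt (by linarith) (by linarith)
    have hs : sin (θ + β) < 0 := sin_neg_of_neg_of_neg_pi_lt (by linarith) (by linarith)
    exact sign_of_pos (mul_pos_of_neg_of_neg hc hs)
  obtain ⟨i2, e2⟩ := piece (-(π / 2)) (-β) (-1) (by linarith) fun θ ⟨h1, h2⟩ => by
    have hc : 0 < cos θ := cos_pos_of_mem_Ioo ⟨by linarith, by linarith⟩
    have hs : sin (θ + β) < 0 := sin_neg_of_neg_of_neg_pi_lt (by linarith) (by linarith)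
    exact sign_of_neg (mul_neg_of_pos_of_neg hc hs)
  obtain ⟨i3, e3⟩ := piece (-β) (π / 2) 1 (by linarith) fun θ ⟨h1, h2⟩ => by
    have hc : 0 < cos θ := cos_pos_of_mem_Ioo ⟨by linarith, by linarith⟩
    have hs : 0 < sin (θ + β) := sin_pos_of_pos_of_lt_pi (by linarith) (by linarith)
    exact sign_of_pos (mul_pos hc hs)
  obtain ⟨i4, e4⟩ := piece (π / 2) (π - β) (-1) (by linarith) fun θ ⟨h1, h2⟩ => by
    have hc : cos θ < 0 := cos_neg_of_pi_div_two_lt_of_lt (by linarith) (by linarith)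
    have hs : 0 < sin (θ + β) := sin_pos_of_pos_of_lt_pi (by linarith) (by linarith)
    exact sign_of_neg (mul_neg_of_neg_of_pos hc hs)
  obtain ⟨i5, e5⟩ := piece (π - β) π 1 (by linarith) fun θ ⟨h1, h2⟩ => by
    have hc : cos θ < 0 := cos_neg_of_pi_div_two_lt_of_lt (by linarith) (by linarith)
    have hs : sin (θ + β) < 0 := by
      rw [← sin_sub_two_pi]; exact sin_neg_of_neg_of_neg_pi_lt (by linarith) (by linarith)
    exact sign_of_pos (mul_pos_of_neg_of_neg hc hs)
  rw [← integral_add_adjacent_intervals (i1.trans (i2.trans (i3.trans i4))) i5,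
    ← integral_add_adjacent_intervals (i1.trans (i2.trans i3)) i4,
    ← integral_add_adjacent_intervals (i1.trans i2) i3,
    ← integral_add_adjacent_intervals i1 i2, e1, e2, e3, e4, e5]
  simp only [cos_neg, sin_neg, cos_pi, sin_pi, cos_pi_div_two, sin_pi_div_two, cos_pi_sub,
    sin_pi_sub]
  ring

theorem expectation_sgn_UV_Vsq (σ : ℝ) (hσ0 : 0 ≤ σ) (hσ1 : σ < 1) :
    (∫ p : ℝ × ℝ, Real.sign ((σ * p.1 + Real.sqrt (1 - σ ^ 2) * p.2) * p.1) * p.1 ^ 2 *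
        ((2 * π)⁻¹ * Real.exp (-(p.1 ^ 2 + p.2 ^ 2) / 2))) =
      (2 / π) * (Real.sqrt (1 - σ ^ 2) * σ +
        Real.arctan (σ / Real.sqrt (1 - σ ^ 2))) := by
  obtain ⟨β, hβ0, hβ1, hσ, hτ, hβ⟩ : ∃ β, 0 ≤ β ∧ β ≤ π / 2 ∧ σ = sin β ∧
      √(1 - σ ^ 2) = cos β ∧ arctan (σ / √(1 - σ ^ 2)) = β :=
    ⟨arcsin σ, arcsin_nonneg.2 hσ0, arcsin_le_pi_div_two σ, (sin_arcsin (by linarith) hσ1.le).symm,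
      (cos_arcsin σ).symm, (arcsin_eq_arctan ⟨by linarith, hσ1⟩).symm⟩
  rw [hβ, hτ]
  subst hσ
  have hradial : ∫ r in Ioi (0 : ℝ), r * (r ^ 2 * exp (-r ^ 2 / 2)) = 2 := by
    simpa only [← mul_assoc, ← pow_succ'] using integral_Ioi_pow_three_mul_exp_neg_sq_div_two
  rw [integral_eq_mul_of_polarCoord_separable (fun r => r ^ 2 * exp (-r ^ 2 / 2))
      (fun θ => (2 * π)⁻¹ * (sign (cos θ * sin (θ + β)) * cos θ ^ 2)),
    hradial, intervalIntegral.integral_const_mul,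
    integral_sign_cos_mul_sin_add_mul_cos_sq hβ0 hβ1]
  · field_simp
    ring
  · intro r hr θ
    have hUV : (sin β * (r * cos θ) + cos β * (r * sin θ)) * (r * cos θ)
        = r ^ 2 * (cos θ * sin (θ + β)) := by
      rw [sin_add]; ring
    have hnorm : (r * cos θ) ^ 2 + (r * sin θ) ^ 2 = r ^ 2 := by
      linear_combination r ^ 2 * cos_sq_add_sin_sq θ
    dsimp only
    rw [hUV, hnorm, sign_mul_of_pos_left (by positivity)]
    ring
end

section
/- For σ∈[0,1) and τ=√(1-σ²), define over α∈(0,π/2] with σ=cos α: (1/π)∫₀^{2π} |sin θ · sin(θ+α)| dθ = (2/π)(sin α + (π/2 - α)cos α). -/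
/-!
The integrand is π-periodic, so the integral over `[0, 2π]` is twice the one over `[0, π]`.
There `sin θ sin (θ + α)` changes sign exactly once, at `θ = π - α`, and on each side the
product-to-sum formula `sin θ sin (θ + α) = (cos α - cos (2θ + α)) / 2` integrates explicitly.
-/

open Real Set intervalIntegral

theorem integral_abs_eq_sub_of_nonneg_of_nonpos {f : ℝ → ℝ} {a b c : ℝ} (hac : a ≤ c)
    (hcb : c ≤ b) (hfac : IntervalIntegrable f MeasureTheory.volume a c)
    (hfcb : IntervalIntegrable f MeasureTheory.volume c b)
    (hnonneg : ∀ x ∈ Icc a c, 0 ≤ f x) (hnonpos : ∀ x ∈ Icc c b, f x ≤ 0) :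
    ∫ x in a..b, |f x| = (∫ x in a..c, f x) - ∫ x in c..b, f x := by
  have hpos : ∫ x in a..c, |f x| = ∫ x in a..c, f x :=
    integral_congr fun x hx ↦ abs_of_nonneg <| hnonneg x <| by rwa [uIcc_of_le hac] at hx
  have hneg : ∫ x in c..b, |f x| = ∫ x in c..b, -f x :=
    integral_congr fun x hx ↦ abs_of_nonpos <| hnonpos x <| by rwa [uIcc_of_le hcb] at hx
  rw [← integral_add_adjacent_intervals hfac.abs hfcb.abs, hpos, hneg, integral_neg,
    sub_eq_add_neg]

namespace Real

theorem sin_mul_sin_add (θ α : ℝ) : sin θ * sin (θ + α) = (cos α - cos (2 * θ + α)) / 2 := by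
  have h := two_mul_sin_mul_sin θ (θ + α)
  rw [show θ - (θ + α) = -α by ring, cos_neg, show θ + (θ + α) = 2 * θ + α by ring] at h
  linarith

theorem integral_sin_mul_sin_add (α a b : ℝ) :
    ∫ θ in a..b, sin θ * sin (θ + α) =
      ((b - a) * cos α - (sin (2 * b + α) - sin (2 * a + α)) / 2) / 2 := by
  simp_rw [sin_mul_sin_add]
  rw [integral_div, integral_sub intervalIntegrable_const
    ((by fun_prop : Continuous fun x ↦ cos (2 * x + α)).intervalIntegrable _ _),
    integral_const, integral_comp_mul_add (fun x ↦ cos x) two_ne_zero, integral_cos]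
  simp only [smul_eq_mul]
  ring

theorem periodic_abs_sin_mul_sin_add (α : ℝ) :
    Function.Periodic (fun θ ↦ |sin θ * sin (θ + α)|) π := fun θ ↦ by
  simp only [show θ + π + α = θ + α + π by ring, sin_add_pi, neg_mul_neg]

theorem sin_mul_sin_add_nonneg {α θ : ℝ} (hα : 0 ≤ α) (hθ : θ ∈ Icc 0 (π - α)) :
    0 ≤ sin θ * sin (θ + α) :=
  mul_nonneg (sin_nonneg_of_nonneg_of_le_pi hθ.1 (by linarith [hθ.2]))
    (sin_nonneg_of_nonneg_of_le_pi (by linarith [hθ.1]) (by linarith [hθ.2]))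

theorem sin_mul_sin_add_nonpos {α θ : ℝ} (hα : α ≤ π) (hθ : θ ∈ Icc (π - α) π) :
    sin θ * sin (θ + α) ≤ 0 := by
  have hshift : 0 ≤ sin (θ + α - π) :=
    sin_nonneg_of_nonneg_of_le_pi (by linarith [hθ.1]) (by linarith [hθ.2])
  rw [sin_sub_pi] at hshift
  exact mul_nonpos_of_nonneg_of_nonpos
    (sin_nonneg_of_nonneg_of_le_pi (by linarith [hθ.1]) hθ.2) (neg_nonneg.mp hshift)

end Real

theorem angular_integral (α : ℝ) (hα0 : 0 < α) (hα1 : α ≤ π / 2) :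
    (1 / π) * ∫ θ in (0:ℝ)..(2 * π), |Real.sin θ * Real.sin (θ + α)| =
      (2 / π) * (Real.sin α + (π / 2 - α) * Real.cos α) := by
  have hcont : Continuous fun θ ↦ sin θ * sin (θ + α) := by fun_prop
  have hαπ : α ≤ π := by linarith [pi_pos]
  have htwo_periods : ∫ θ in (0:ℝ)..(2 * π), |sin θ * sin (θ + α)| =
      2 * ∫ θ in (0:ℝ)..π, |sin θ * sin (θ + α)| := by
    rw [two_mul, (periodic_abs_sin_mul_sin_add α).intervalIntegral_add_eq_add 0 π
      fun _ _ ↦ hcont.abs.intervalIntegrable _ _, zero_add, two_mul]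
  rw [htwo_periods, integral_abs_eq_sub_of_nonneg_of_nonpos (by linarith) (by linarith)
      (hcont.intervalIntegrable _ _) (hcont.intervalIntegrable _ _)
      (fun _ ↦ sin_mul_sin_add_nonneg hα0.le) (fun _ ↦ sin_mul_sin_add_nonpos hαπ),
    integral_sin_mul_sin_add, integral_sin_mul_sin_add,
    show 2 * (π - α) + α = 2 * π - α by ring, show 2 * π + α = α + 2 * π by ring,
    sin_two_pi_sub, sin_add_two_pi, mul_zero, zero_add]
  field_simp
  ring
end

section
/- ∫₀^{1/2} (1+2t³-2.5t) · 16t(1+t²)/(π((1+t²)²-4t²)²) dt = (4/π)(35/27 - ln 3), and this value is less than 0.26. -/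
open Real

-- Partial fractions, the denominator of the integrand being `π (1 - t)⁴ (1 + t)⁴`.
noncomputable def primitiveQ (t : ℝ) : ℝ :=
  (4 * log (1 - t) - 4 * log (1 + t) + 12 / (1 - t) - 12 / (1 + t)
    - 7 / (2 * (1 - t) ^ 2) + 7 / (2 * (1 + t) ^ 2) + 1 / (3 * (1 - t) ^ 3) + 1 / (1 + t) ^ 3) / π

theorem one_add_sq_sq_sub_four_mul_sq (t : ℝ) :
    (1 + t ^ 2) ^ 2 - 4 * t ^ 2 = ((1 - t) * (1 + t)) ^ 2 := by
  ring

theorem hasDerivAt_primitiveQ {x : ℝ} (h₁ : 1 - x ≠ 0) (h₂ : 1 + x ≠ 0) :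
    HasDerivAt primitiveQ ((1 + 2 * x ^ 3 - 2.5 * x) *
      (16 * x * (1 + x ^ 2) / (π * ((1 + x ^ 2) ^ 2 - 4 * x ^ 2) ^ 2))) x := by
  have dm : HasDerivAt (fun t : ℝ => 1 - t) (-1) x := by
    simpa using (hasDerivAt_id x).const_sub 1
  have dp : HasDerivAt (fun t : ℝ => 1 + t) 1 x := (hasDerivAt_id x).const_add 1
  have D := ((((((((dm.log h₁).const_mul 4).sub ((dp.log h₂).const_mul 4)).add
    ((hasDerivAt_const x (12 : ℝ)).div dm h₁)).sub ((hasDerivAt_const x (12 : ℝ)).div dp h₂)).sub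
    ((hasDerivAt_const x (7 : ℝ)).div ((dm.pow 2).const_mul 2) (by simp [h₁]))).add
    ((hasDerivAt_const x (7 : ℝ)).div ((dp.pow 2).const_mul 2) (by simp [h₂]))).add
    ((hasDerivAt_const x (1 : ℝ)).div ((dm.pow 3).const_mul 3) (by simp [h₁]))).add
    ((hasDerivAt_const x (1 : ℝ)).div (dp.pow 3) (by simp [h₂])) |>.div_const π
  refine D.congr_deriv ?_
  simp only [Pi.pow_apply]
  rw [one_add_sq_sq_sub_four_mul_sq]
  field_simp
  ring

theorem continuousOn_integrand {s : Set ℝ} (hs : ∀ t ∈ s, 1 - t ≠ 0 ∧ 1 + t ≠ 0) :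
    ContinuousOn (fun t : ℝ => (1 + 2 * t ^ 3 - 2.5 * t) *
      (16 * t * (1 + t ^ 2) / (π * ((1 + t ^ 2) ^ 2 - 4 * t ^ 2) ^ 2))) s := by
  have hden (t : ℝ) (ht : t ∈ s) : π * ((1 + t ^ 2) ^ 2 - 4 * t ^ 2) ^ 2 ≠ 0 := by
    obtain ⟨h₁, h₂⟩ := hs t ht
    rw [one_add_sq_sq_sub_four_mul_sq]
    positivity
  exact ContinuousOn.mul (by fun_prop) (ContinuousOn.div (by fun_prop) (by fun_prop) hden)

theorem primitiveQ_one_half_sub_primitiveQ_zero :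
    primitiveQ (1 / 2) - primitiveQ 0 = (4 / π) * (35 / 27 - log 3) := by
  have hlog : 4 * log (1 - 1 / 2) - 4 * log (1 + 1 / 2) = -4 * log 3 := by
    rw [← mul_sub, ← log_div (by norm_num) (by norm_num), neg_mul, ← mul_neg, ← log_inv]
    norm_num
  simp only [primitiveQ, hlog, sub_zero, add_zero, log_one]
  field_simp
  ring

theorem four_div_pi_mul_sub_log_three_lt :
    (4 / π) * (35 / 27 - log 3) < 0.26 := by
  have := pi_gt_d2
  have := log_three_gt_d9
  rw [div_mul_eq_mul_div, div_lt_iff₀ pi_pos]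
  norm_num at *
  nlinarith

theorem integral_Q_at_one :
    (∫ t in (0:ℝ)..(1 / 2),
        (1 + 2 * t ^ 3 - 2.5 * t) * (16 * t * (1 + t ^ 2) /
          (π * ((1 + t ^ 2) ^ 2 - 4 * t ^ 2) ^ 2))) =
      (4 / π) * (35 / 27 - Real.log 3) ∧
    (4 / π) * (35 / 27 - Real.log 3) < 0.26 := by
  have hpole (t : ℝ) (ht : t ∈ Set.uIcc (0 : ℝ) (1 / 2)) : 1 - t ≠ 0 ∧ 1 + t ≠ 0 := by
    rw [Set.uIcc_of_le (by norm_num)] at ht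
    constructor <;> linarith [ht.1, ht.2]
  refine ⟨?_, four_div_pi_mul_sub_log_three_lt⟩
  rw [intervalIntegral.integral_eq_sub_of_hasDerivAt
    (fun t ht => hasDerivAt_primitiveQ (hpole t ht).1 (hpole t ht).2)
    (continuousOn_integrand hpole).intervalIntegrable]
  exact primitiveQ_one_half_sub_primitiveQ_zero
end

section
/- For σ∈(0,1) and τ=√(1-σ²), the quantity (1/τ³)(1 - (2/π)(τ + (1/σ)arctan(σ/τ))) is at most 1 - 4/π, and 1 - 4/π ≤ -0.27. -/
/-!
Put `σ = sin t`, `τ = cos t` with `t ∈ (0, π/2)`, so that `arctan (σ / τ) = t`. Clearing the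
positive denominator `π σ τ³`, the bound becomes `G t ≥ 0` for
`G t = 2t - sin t (π - 2 cos t + (4 - π) cos³ t)`. Now `G 0 = G (π/2) = 0` and
`G' t = cos t (1 - cos t) q (cos t)` with `q c = (16 - 4π)(c² + c) - π` increasing for `c ≥ 0`,
so `G` first increases and then decreases on `[0, π/2]`, and hence stays nonnegative.
-/

open Real Set

theorem nonneg_of_hasDerivAt_mul_antitoneOn {f w g : ℝ → ℝ} {a b t : ℝ}
    (hf : ∀ x ∈ Icc a b, HasDerivAt f (w x * g x) x) (hw : ∀ x ∈ Icc a b, 0 ≤ w x)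
    (hg : AntitoneOn g (Icc a b)) (ha : 0 ≤ f a) (hb : 0 ≤ f b) (ht : t ∈ Icc a b) :
    0 ≤ f t := by
  have hleft : Icc a t ⊆ Icc a b := Icc_subset_Icc_right ht.2
  have hright : Icc t b ⊆ Icc a b := Icc_subset_Icc_left ht.1
  have hcont : ∀ s ⊆ Icc a b, ContinuousOn f s :=
    fun s hs => HasDerivAt.continuousOn fun x hx => hf x (hs hx)
  have hderiv : ∀ s ⊆ Icc a b, ∀ x ∈ interior s,
      HasDerivWithinAt f (w x * g x) (interior s) x :=
    fun s hs x hx => (hf x (hs (interior_subset hx))).hasDerivWithinAt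
  rcases le_total 0 (g t) with hgt | hgt
  · have hmono : MonotoneOn f (Icc a t) := by
      refine monotoneOn_of_hasDerivWithinAt_nonneg (convex_Icc a t) (hcont _ hleft)
        (hderiv _ hleft) fun x hx => ?_
      rw [interior_Icc] at hx
      have hx' : x ∈ Icc a b := hleft (Ioo_subset_Icc_self hx)
      exact mul_nonneg (hw x hx') (hgt.trans (hg hx' ht hx.2.le))
    exact ha.trans (hmono (left_mem_Icc.2 ht.1) (right_mem_Icc.2 ht.1) ht.1)
  · have hanti : AntitoneOn f (Icc t b) := by
      refine antitoneOn_of_hasDerivWithinAt_nonpos (convex_Icc t b) (hcont _ hright)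
        (hderiv _ hright) fun x hx => ?_
      rw [interior_Icc] at hx
      have hx' : x ∈ Icc a b := hright (Ioo_subset_Icc_self hx)
      exact mul_nonpos_of_nonneg_of_nonpos (hw x hx') ((hg ht hx' hx.1.le).trans hgt)
    exact hb.trans (hanti (left_mem_Icc.2 ht.2) (right_mem_Icc.2 ht.2) ht.2)

noncomputable def boundGap (t : ℝ) : ℝ :=
  2 * t - sin t * (π - 2 * cos t + (4 - π) * cos t ^ 3)

theorem hasDerivAt_boundGap (t : ℝ) :
    HasDerivAt boundGap
      (cos t * (1 - cos t) * ((16 - 4 * π) * (cos t ^ 2 + cos t) - π)) t := by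
  have hpow : HasDerivAt (fun u => cos u ^ 3) (3 * cos t ^ 2 * -sin t) t := by
    simpa using (hasDerivAt_cos t).fun_pow 3
  have hfactor := ((hasDerivAt_const t π).sub ((hasDerivAt_cos t).const_mul 2)).add
    (hpow.const_mul (4 - π))
  refine (((hasDerivAt_id t).const_mul 2).sub ((hasDerivAt_sin t).mul hfactor)).congr_deriv ?_
  simp only [Pi.add_apply, Pi.sub_apply]
  linear_combination (3 * (4 - π) * cos t ^ 2 - 2) * sin_sq_add_cos_sq t

theorem boundGap_nonneg {t : ℝ} (ht : t ∈ Icc 0 (π / 2)) : 0 ≤ boundGap t := by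
  have hcos_nonneg : ∀ x ∈ Icc 0 (π / 2), 0 ≤ cos x := fun x hx =>
    cos_nonneg_of_mem_Icc ⟨by linarith [hx.1, pi_pos], hx.2⟩
  refine nonneg_of_hasDerivAt_mul_antitoneOn (fun x _ => hasDerivAt_boundGap x)
    (fun x hx => mul_nonneg (hcos_nonneg x hx) (sub_nonneg.2 (cos_le_one x)))
    (fun x hx y hy hxy => ?_) (by simp [boundGap]) (by simp [boundGap]; linarith) ht
  have hcos_le : cos y ≤ cos x := cos_le_cos_of_nonneg_of_le_pi hx.1 (by linarith [hy.2, pi_pos]) hxy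
  have h4 : 0 ≤ 16 - 4 * π := by linarith [pi_lt_four]
  have := hcos_nonneg y hy
  nlinarith [mul_le_mul_of_nonneg_left hcos_le h4]

theorem one_div_cos_pow_mul_le_one_sub_four_div_pi {t : ℝ} (ht₀ : 0 < t) (ht : t < π / 2) :
    (1 / cos t ^ 3) * (1 - (2 / π) * (cos t + (1 / sin t) * t)) ≤ 1 - 4 / π := by
  have hsin : 0 < sin t := sin_pos_of_pos_of_lt_pi ht₀ (by linarith)
  have hcos : 0 < cos t := cos_pos_of_mem_Ioo ⟨by linarith, ht⟩
  have hgap := boundGap_nonneg ⟨ht₀.le, ht.le⟩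
  rw [boundGap] at hgap
  rw [one_div_mul_eq_div, div_le_iff₀ (by positivity),
    ← mul_le_mul_iff_left₀ (show 0 < π * sin t by positivity)]
  field_simp
  linarith

theorem one_sub_four_div_pi_le : 1 - 4 / π ≤ -0.27 := by
  rw [show (-0.27 : ℝ) = 1 - 1.27 by norm_num, sub_le_sub_iff_left, le_div_iff₀ pi_pos]
  linarith [pi_lt_d4]

theorem P_upper_bound (σ : ℝ) (hσ : σ ∈ Set.Ioo (0:ℝ) 1) :
    (1 / Real.sqrt (1 - σ ^ 2) ^ 3) *
        (1 - (2 / π) * (Real.sqrt (1 - σ ^ 2) +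
          (1 / σ) * Real.arctan (σ / Real.sqrt (1 - σ ^ 2)))) ≤ 1 - 4 / π ∧
    1 - 4 / π ≤ -0.27 := by
  obtain ⟨hσ₀, hσ₁⟩ := hσ
  have ht₀ : 0 < arcsin σ := arcsin_pos.2 hσ₀
  have ht : arcsin σ < π / 2 := arcsin_lt_pi_div_two.2 hσ₁
  have harctan : arctan (σ / √(1 - σ ^ 2)) = arcsin σ := by
    rw [← tan_arcsin, arctan_tan (by linarith) ht]
  have hbound := one_div_cos_pow_mul_le_one_sub_four_div_pi ht₀ ht
  rw [sin_arcsin (by linarith) hσ₁.le, cos_arcsin] at hbound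
  exact ⟨harctan ▸ hbound, one_sub_four_div_pi_le⟩
end

section
/- Define g₀(β) = 1 - (3+β²+2β)/(π(1+β²)β) + ((3-β²-2β)/(πβ²))·arctan β. Then g₀(β) < -0.03 for all β ∈ (0, 3/4]. -/
/-!
Since `3 - β² - 2β = (1 - β)(3 + β) ≥ 0` on `(0, 3/4]`, replacing `arctan β` by its degree-9 Taylor
polynomial, which bounds it from above on `[0, ∞)`, can only increase `g₀(β)`. What remains is a
polynomial inequality, with `π < 3.1416` as the only numerical input; the margin at `β = 3/4` is
about `0.002`, which is why five terms of the series are needed.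
-/

open Real Finset

theorem Real.arctan_le_sum_range_of_nonneg {x : ℝ} (hx : 0 ≤ x) (m : ℕ) :
    arctan x ≤ ∑ k ∈ range (2 * m + 1), (-1) ^ k * x ^ (2 * k + 1) / (2 * k + 1) := by
  set f : ℝ → ℝ := fun t ↦ ∑ k ∈ range (2 * m + 1), (-1) ^ k * t ^ (2 * k + 1) / (2 * k + 1) -
    arctan t with hf
  have hderiv (t : ℝ) : HasDerivAt f ((t ^ (2 * m + 1)) ^ 2 / (1 + t ^ 2)) t := by
    have hsum : HasDerivAt
        (fun t : ℝ ↦ ∑ k ∈ range (2 * m + 1), (-1) ^ k * t ^ (2 * k + 1) / (2 * k + 1))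
        (∑ k ∈ range (2 * m + 1), (-t ^ 2) ^ k) t := by
      refine (HasDerivAt.fun_sum fun k _ ↦
        ((hasDerivAt_pow _ t).const_mul _).div_const _).congr_deriv (sum_congr rfl fun k _ ↦ ?_)
      rw [neg_pow (t ^ 2), ← pow_mul, Nat.add_sub_cancel]
      field_simp
      push_cast
      ring
    have hgeom : (∑ k ∈ range (2 * m + 1), (-t ^ 2) ^ k) * (1 + t ^ 2) =
        1 + (t ^ (2 * m + 1)) ^ 2 := by
      have hodd : (-t ^ 2) ^ (2 * m + 1) = -(t ^ (2 * m + 1)) ^ 2 := by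
        rw [Odd.neg_pow ⟨m, rfl⟩, ← pow_mul, ← pow_mul, mul_comm]
      linear_combination -geom_sum_mul (-t ^ 2) (2 * m + 1) - hodd
    refine (hsum.sub (hasDerivAt_arctan t)).congr_deriv ?_
    have : 0 < 1 + t ^ 2 := by positivity
    field_simp
    linear_combination hgeom
  have hmono : Monotone f := monotone_of_deriv_nonneg (fun t ↦ (hderiv t).differentiableAt)
    fun t ↦ by rw [(hderiv t).deriv]; positivity
  have hf0 : f 0 = 0 := by simp [hf]
  have hfx : 0 ≤ f x := hf0 ▸ hmono hx
  exact sub_nonneg.1 hfx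

theorem Real.arctan_le_taylor_nine {x : ℝ} (hx : 0 ≤ x) :
    arctan x ≤ x - x ^ 3 / 3 + x ^ 5 / 5 - x ^ 7 / 7 + x ^ 9 / 9 := by
  have h := arctan_le_sum_range_of_nonneg hx 2
  norm_num [sum_range_succ] at h
  linarith

/-- With `a = arctan β` this is the numerator of `1 - g₀(β)` over the denominator
`π β² (1 + β²)`. -/
def g0Numerator (β a : ℝ) : ℝ :=
  β * (3 + β ^ 2 + 2 * β) - (3 - β ^ 2 - 2 * β) * (1 + β ^ 2) * a

theorem g0_eq_one_sub_div {β : ℝ} (hβ : β ≠ 0) :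
    1 - (3 + β ^ 2 + 2 * β) / (π * (1 + β ^ 2) * β) +
        ((3 - β ^ 2 - 2 * β) / (π * β ^ 2)) * arctan β =
      1 - g0Numerator β (arctan β) / (π * (β ^ 2 * (1 + β ^ 2))) := by
  unfold g0Numerator
  field_simp
  ring

theorem g0Numerator_antitone {β : ℝ} (hβ : -3 ≤ β) (hβ' : β ≤ 1) :
    Antitone (g0Numerator β) := fun a b hab ↦ by
  have hfactor : 3 - β ^ 2 - 2 * β = (1 - β) * (3 + β) := by ring
  have hcoef : 0 ≤ (3 - β ^ 2 - 2 * β) * (1 + β ^ 2) :=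
    mul_nonneg (hfactor ▸ mul_nonneg (by linarith) (by linarith)) (by positivity)
  exact sub_le_sub_left (mul_le_mul_of_nonneg_left hab hcoef) _

theorem g0Numerator_taylor_gt {β : ℝ} (hβ : 0 < β) (hβ' : β ≤ 3 / 4) :
    1.03 * 3.1416 * (β ^ 2 * (1 + β ^ 2)) <
      g0Numerator β (β - β ^ 3 / 3 + β ^ 5 / 5 - β ^ 7 / 7 + β ^ 9 / 9) := by
  -- The difference is `β² Q(β)` with `Q(β) = Q(3/4) + (3/4 - β) R(β)` and `Q(3/4) > 0`; the
  -- negative coefficients of `R` are absorbed by its constant term via `β ^ k ≤ (3/4) ^ k`.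
  have hsq : 0 < β ^ 2 := by positivity
  have hgap : 0 ≤ β ^ 2 * (3 / 4 - β) := mul_nonneg hsq.le (by linarith)
  have hlow (k : ℕ) : 0 ≤ β ^ 2 * (3 / 4 - β) * β ^ k := mul_nonneg hgap (pow_nonneg hβ.le k)
  have hup (k : ℕ) : 0 ≤ β ^ 2 * (3 / 4 - β) * ((3 / 4) ^ k - β ^ k) :=
    mul_nonneg hgap (sub_nonneg.2 (pow_le_pow_left₀ hβ.le hβ' k))
  unfold g0Numerator
  linarith [hlow 0, hlow 1, hlow 3, hlow 4, hlow 7, hlow 8, hup 2, hup 5, hup 6, hup 9, hup 10]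

theorem g0Numerator_arctan_gt {β : ℝ} (hβ : 0 < β) (hβ' : β ≤ 3 / 4) :
    1.03 * π * (β ^ 2 * (1 + β ^ 2)) < g0Numerator β (arctan β) :=
  calc 1.03 * π * (β ^ 2 * (1 + β ^ 2))
      < 1.03 * 3.1416 * (β ^ 2 * (1 + β ^ 2)) := by gcongr; exact pi_lt_d4
    _ < g0Numerator β (β - β ^ 3 / 3 + β ^ 5 / 5 - β ^ 7 / 7 + β ^ 9 / 9) :=
        g0Numerator_taylor_gt hβ hβ'
    _ ≤ g0Numerator β (arctan β) :=
        g0Numerator_antitone (by linarith) (by linarith) (arctan_le_taylor_nine hβ.le)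

theorem g0_neg (β : ℝ) (hβ : β ∈ Set.Ioc (0:ℝ) (3 / 4)) :
    1 - (3 + β ^ 2 + 2 * β) / (π * (1 + β ^ 2) * β) +
      ((3 - β ^ 2 - 2 * β) / (π * β ^ 2)) * Real.arctan β < -0.03 := by
  obtain ⟨hβ0, hβ34⟩ := hβ
  have hratio : 1.03 < g0Numerator β (arctan β) / (π * (β ^ 2 * (1 + β ^ 2))) :=
    (lt_div_iff₀ (by positivity)).2 (by linarith [g0Numerator_arctan_gt hβ0 hβ34])
  rw [g0_eq_one_sub_div hβ0.ne']
  linarith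
end

section
/- The function f₁(θ) = (θ/sin θ + cos θ - π/2)/cos²θ is monotonically increasing on (0, π/2). -/
/-!
Differentiating, `f₁' = h / (sin² θ cos³ θ)` where `h(0) = h(π/2) = 0` and `h' = sin θ cos θ · k`.
Again `k(0) = k(π/2) = 0`, and `k'' = sin θ (3π - 16 cos θ)`, so `k` is strictly concave up to
`θ₀ = arccos (3π/16)` and strictly convex after it. Since `k(θ₀) < 0`, `k` is positive and then
negative on `(0, π/2)`; hence `h` first increases and then decreases, so it stays positive.
-/

open Real Set

theorem pos_of_deriv_pos_then_neg {f : ℝ → ℝ} {a b x : ℝ} (hf : ContinuousOn f (Icc a b))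
    (ha : 0 ≤ f a) (hb : 0 ≤ f b)
    (hsign : ∀ y z, a < y → y < z → z < b → 0 ≤ deriv f z → 0 < deriv f y)
    (hx : x ∈ Ioo a b) : 0 < f x := by
  obtain ⟨hax, hxb⟩ := hx
  rcases le_or_gt 0 (deriv f x) with hfx | hfx
  · have hmono : StrictMonoOn f (Icc a x) :=
      strictMonoOn_of_deriv_pos (convex_Icc a x) (hf.mono (Icc_subset_Icc_right hxb.le))
        fun y hy ↦ by
          rw [interior_Icc] at hy
          exact hsign y x hy.1 hy.2 hxb hfx
    exact ha.trans_lt (hmono (left_mem_Icc.2 hax.le) (right_mem_Icc.2 hax.le) hax)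
  · have hanti : StrictAntiOn f (Icc x b) :=
      strictAntiOn_of_deriv_neg (convex_Icc x b) (hf.mono (Icc_subset_Icc_left hax.le))
        fun z hz ↦ by
          rw [interior_Icc] at hz
          exact not_le.1 fun hfz ↦ (hsign x z hax hz.1 hz.2 hfz).not_gt hfx
    exact hb.trans_lt (hanti (left_mem_Icc.2 hxb.le) (right_mem_Icc.2 hxb.le) hxb)

lemma sin_pos_and_cos_pos {x : ℝ} (hx : x ∈ Ioo 0 (π / 2)) : 0 < sin x ∧ 0 < cos x :=
  ⟨sin_pos_of_pos_of_lt_pi hx.1 (by linarith [hx.2, pi_pos]),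
    cos_pos_of_mem_Ioo ⟨by linarith [hx.1, pi_pos], hx.2⟩⟩

namespace F1

noncomputable def h (θ : ℝ) : ℝ :=
  sin θ * cos θ * (1 + sin θ ^ 2) + θ * (3 * sin θ ^ 2 - 1) - π * sin θ ^ 3

noncomputable def k (θ : ℝ) : ℝ := 4 * sin θ * cos θ + 6 * θ - 3 * π * sin θ

noncomputable def θ₀ : ℝ := arccos (3 * π / 16)

lemma hasDerivAt_k (x : ℝ) :
    HasDerivAt k (4 * (cos x ^ 2 - sin x ^ 2) + 6 - 3 * π * cos x) x := by
  refine (((((hasDerivAt_sin x).const_mul 4).mul (hasDerivAt_cos x)).add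
    ((hasDerivAt_id' x).const_mul 6)).sub ((hasDerivAt_sin x).const_mul (3 * π))).congr_deriv ?_
  ring

lemma deriv2_k (x : ℝ) : deriv^[2] k x = sin x * (3 * π - 16 * cos x) := by
  have hk : deriv k = fun x ↦ 4 * (cos x ^ 2 - sin x ^ 2) + 6 - 3 * π * cos x :=
    funext fun x ↦ (hasDerivAt_k x).deriv
  have hk' : HasDerivAt (fun x ↦ 4 * (cos x ^ 2 - sin x ^ 2) + 6 - 3 * π * cos x)
      (sin x * (3 * π - 16 * cos x)) x := by
    refine ((((((hasDerivAt_cos x).pow 2).sub ((hasDerivAt_sin x).pow 2)).const_mul 4).add_const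
      6).sub ((hasDerivAt_cos x).const_mul (3 * π))).congr_deriv ?_
    push_cast
    ring
  rw [Function.iterate_succ_apply, Function.iterate_one, hk, hk'.deriv]

lemma k_zero : k 0 = 0 := by simp [k]

lemma k_pi_div_two : k (π / 2) = 0 := by
  simp [k]
  ring

lemma cos_θ₀ : cos θ₀ = 3 * π / 16 :=
  cos_arccos (by linarith [pi_pos]) (by linarith [pi_lt_d2])

lemma θ₀_lt : θ₀ < 0.945 := by
  -- `cos_bound` at `0.945` itself is too weak; apply it at half the angle instead.
  have hcos : cos 0.945 < 3 * π / 16 := by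
    have hb := cos_bound (x := 0.4725) (by rw [abs_of_pos] <;> norm_num)
    rw [abs_le, abs_of_pos (by norm_num : (0:ℝ) < 0.4725)] at hb
    have hnn : 0 ≤ cos 0.4725 :=
      (cos_pos_of_mem_Ioo ⟨by linarith [pi_pos], by linarith [pi_gt_d2]⟩).le
    rw [show (0.945 : ℝ) = 2 * 0.4725 by norm_num, cos_two_mul]
    nlinarith [pi_gt_d6]
  by_contra! hle
  linarith [cos_θ₀ ▸ cos_le_cos_of_nonneg_of_le_pi (by norm_num) (arccos_le_pi _) hle]

lemma θ₀_lt_pi_div_two : θ₀ < π / 2 := by linarith [θ₀_lt, pi_gt_d2]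

lemma k_θ₀_neg : k θ₀ < 0 := by
  have hsin : 0.808 ≤ sin θ₀ := by
    rw [θ₀, sin_arccos, le_sqrt (by norm_num) (by nlinarith [pi_lt_d6, pi_pos])]
    nlinarith [pi_gt_d6, pi_lt_d6]
  -- `k θ₀ = 6 θ₀ - (9π/4) sin θ₀`
  rw [k, cos_θ₀]
  nlinarith [θ₀_lt, pi_gt_d6]

lemma k_strictConcaveOn : StrictConcaveOn ℝ (Icc 0 θ₀) k := by
  refine strictConcaveOn_of_deriv2_neg (convex_Icc _ _)
    (fun x _ ↦ (hasDerivAt_k x).continuousAt.continuousWithinAt) fun x hx ↦ ?_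
  rw [interior_Icc] at hx
  have hcos : 3 * π / 16 < cos x := cos_θ₀ ▸
    cos_lt_cos_of_nonneg_of_le_pi hx.1.le (arccos_le_pi _) hx.2
  rw [deriv2_k]
  have hsin : 0 < sin x :=
    sin_pos_of_pos_of_lt_pi hx.1 (by linarith [hx.2, θ₀_lt_pi_div_two, pi_pos])
  exact mul_neg_of_pos_of_neg hsin (by linarith)

lemma k_strictConvexOn : StrictConvexOn ℝ (Icc θ₀ (π / 2)) k := by
  refine strictConvexOn_of_deriv2_pos (convex_Icc _ _)
    (fun x _ ↦ (hasDerivAt_k x).continuousAt.continuousWithinAt) fun x hx ↦ ?_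
  rw [interior_Icc] at hx
  have hθ₀ : 0 ≤ θ₀ := arccos_nonneg _
  have hcos : cos x < 3 * π / 16 := cos_θ₀ ▸
    cos_lt_cos_of_nonneg_of_le_pi hθ₀ (by linarith [hx.2, pi_pos]) hx.1
  have hsin : 0 < sin x := sin_pos_of_pos_of_lt_pi (by linarith [hx.1]) (by linarith [hx.2, pi_pos])
  rw [deriv2_k]
  exact mul_pos hsin (by linarith)

lemma k_neg_of_θ₀_lt {z : ℝ} (hz : θ₀ < z) (hz' : z < π / 2) : k z < 0 := by
  have := k_strictConvexOn.lt_on_openSegment (left_mem_Icc.2 θ₀_lt_pi_div_two.le)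
    (right_mem_Icc.2 θ₀_lt_pi_div_two.le) θ₀_lt_pi_div_two.ne
    (by rw [openSegment_eq_Ioo θ₀_lt_pi_div_two]; exact ⟨hz, hz'⟩)
  rwa [k_pi_div_two, max_eq_right k_θ₀_neg.le] at this

lemma k_pos_of_lt_of_nonneg {y z : ℝ} (hy : 0 < y) (hyz : y < z) (hz : z < π / 2)
    (hkz : 0 ≤ k z) : 0 < k y := by
  have hz₀ : 0 < z := hy.trans hyz
  have hzθ₀ : z ≤ θ₀ := not_lt.1 fun h ↦ (k_neg_of_θ₀_lt h hz).not_ge hkz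
  have := k_strictConcaveOn.lt_on_openSegment (left_mem_Icc.2 (arccos_nonneg _)) ⟨hz₀.le, hzθ₀⟩
    hz₀.ne (by rw [openSegment_eq_Ioo hz₀]; exact ⟨hy, hyz⟩)
  rwa [k_zero, min_eq_left hkz] at this

lemma hasDerivAt_h (x : ℝ) : HasDerivAt h (sin x * cos x * k x) x := by
  refine (((((hasDerivAt_sin x).mul (hasDerivAt_cos x)).mul
    (((hasDerivAt_sin x).pow 2).const_add 1)).add
    ((hasDerivAt_id' x).mul ((((hasDerivAt_sin x).pow 2).const_mul 3).sub_const 1))).sub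
    (((hasDerivAt_sin x).pow 3).const_mul π)).congr_deriv ?_
  simp only [k, Pi.mul_apply, Pi.pow_apply]
  push_cast
  linear_combination (1 - sin x ^ 2) * sin_sq_add_cos_sq x

lemma h_zero : h 0 = 0 := by simp [h]

lemma h_pi_div_two : h (π / 2) = 0 := by
  simp [h]
  ring

lemma h_pos {x : ℝ} (hx : x ∈ Ioo 0 (π / 2)) : 0 < h x := by
  refine pos_of_deriv_pos_then_neg (fun y _ ↦ (hasDerivAt_h y).continuousAt.continuousWithinAt)
    h_zero.ge h_pi_div_two.ge (fun y z hy hyz hz hhz ↦ ?_) hx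
  have hsc : ∀ t ∈ Ioo 0 (π / 2), 0 < sin t * cos t :=
    fun t ht ↦ (sin_pos_and_cos_pos ht).elim mul_pos
  rw [(hasDerivAt_h z).deriv] at hhz
  rw [(hasDerivAt_h y).deriv]
  have hkz : 0 ≤ k z := nonneg_of_mul_nonneg_right hhz (hsc z ⟨hy.trans hyz, hz⟩)
  exact mul_pos (hsc y ⟨hy, hyz.trans hz⟩) (k_pos_of_lt_of_nonneg hy hyz hz hkz)

lemma hasDerivAt_f1 {x : ℝ} (hx : x ∈ Ioo 0 (π / 2)) :
    HasDerivAt (fun θ : ℝ => (θ / sin θ + cos θ - π / 2) / cos θ ^ 2)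
      (h x / (sin x ^ 2 * cos x ^ 3)) x := by
  obtain ⟨hs, hc⟩ := sin_pos_and_cos_pos hx
  refine (((((hasDerivAt_id' x).div (hasDerivAt_sin x) hs.ne').add (hasDerivAt_cos x)).sub_const
    (π / 2)).div ((hasDerivAt_cos x).pow 2) (pow_ne_zero 2 hc.ne')).congr_deriv ?_
  simp only [h, Pi.add_apply, Pi.div_apply, Pi.pow_apply]
  field_simp
  push_cast
  linear_combination (-2 * x * cos x) * sin_sq_add_cos_sq x

end F1

theorem f1_strictMono :
    StrictMonoOn (fun θ : ℝ => (θ / Real.sin θ + Real.cos θ - π / 2) / Real.cos θ ^ 2)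
      (Set.Ioo 0 (π / 2)) := by
  refine strictMonoOn_of_deriv_pos (convex_Ioo _ _)
    (fun x hx ↦ (F1.hasDerivAt_f1 hx).continuousAt.continuousWithinAt) fun x hx ↦ ?_
  rw [interior_Ioo] at hx
  obtain ⟨hs, hc⟩ := sin_pos_and_cos_pos hx
  rw [(F1.hasDerivAt_f1 hx).deriv]
  exact div_pos (F1.h_pos hx) (by positivity)
end

section
/- For all t ∈ (0,1): t^{-3/2}(1-t)^{-1/2} · ((2-3t)·arcsin(√(1-t))/√(1-t) + (2-t)√t - π(1-t)) ≥ 0; equivalently (2-3t)·arcsin(√(1-t))/√(1-t) + (2-t)√t - π(1-t) ≥ 0 for t∈(0,1). -/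
/-!
Put `s = √(1 - t)`. Then `s` times the bracket is
`g s = (3s² - 1) arcsin s + s(1 + s²)√(1 - s²) - π s³`, which vanishes at `s = 0` and `s = 1`
and has derivative `s · h s` with `h u = 6 arcsin u + 4u√(1 - u²) - 3πu`.
The function `h` is nonnegative on `[0, 1/2]` (as `arcsin u ≥ u`), nonpositive on `[9/10, 1)`
(as `arcsin u = π/2 - arcsin √(1 - u²)`) and decreasing in between, so it changes sign once,
from `+` to `-`. Hence `g` first increases and then decreases on `[0, 1]`, so `g ≥ 0` there;
dividing by `s > 0` gives the claim.
-/

open Real Set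

lemma min_le_of_hasDerivAt_nonneg_nonpos {f f' : ℝ → ℝ} {a b c x : ℝ}
    (hf : ContinuousOn f (Icc a b)) (hf' : ∀ y ∈ Ioo a b, HasDerivAt f (f' y) y)
    (hc : c ∈ Icc a b) (hleft : ∀ y ∈ Ioo a c, 0 ≤ f' y) (hright : ∀ y ∈ Ioo c b, f' y ≤ 0)
    (hx : x ∈ Icc a b) : min (f a) (f b) ≤ f x := by
  rcases le_total x c with hxc | hcx
  · have hmono : MonotoneOn f (Icc a c) := by
      refine monotoneOn_of_hasDerivWithinAt_nonneg (f' := f') (convex_Icc a c)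
        (hf.mono (Icc_subset_Icc_right hc.2)) (fun y hy ↦ ?_) (fun y hy ↦ ?_)
      · rw [interior_Icc] at hy ⊢
        exact (hf' y ⟨hy.1, hy.2.trans_le hc.2⟩).hasDerivWithinAt
      · exact hleft y (by rwa [interior_Icc] at hy)
    exact min_le_of_left_le (hmono (left_mem_Icc.2 hc.1) ⟨hx.1, hxc⟩ hx.1)
  · have hanti : AntitoneOn f (Icc c b) := by
      refine antitoneOn_of_hasDerivWithinAt_nonpos (f' := f') (convex_Icc c b)
        (hf.mono (Icc_subset_Icc_left hc.1)) (fun y hy ↦ ?_) (fun y hy ↦ ?_)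
      · rw [interior_Icc] at hy ⊢
        exact (hf' y ⟨hc.1.trans_lt hy.1, hy.2⟩).hasDerivWithinAt
      · exact hright y (by rwa [interior_Icc] at hy)
    exact min_le_of_right_le (hanti ⟨hcx, hx.2⟩ (right_mem_Icc.2 hc.2) hx.2)

lemma exists_sign_change_of_antitoneOn {f : ℝ → ℝ} {a b : ℝ} (hab : a ≤ b)
    (hf : ContinuousOn f (Icc a b)) (hanti : AntitoneOn f (Icc a b))
    (ha : 0 ≤ f a) (hb : f b ≤ 0) :
    ∃ c ∈ Icc a b, (∀ x ∈ Icc a c, 0 ≤ f x) ∧ ∀ x ∈ Icc c b, f x ≤ 0 := by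
  obtain ⟨c, hc, hfc⟩ := intermediate_value_Icc' hab hf ⟨hb, ha⟩
  refine ⟨c, hc, fun x hx ↦ ?_, fun x hx ↦ ?_⟩
  · exact hfc ▸ hanti ⟨hx.1, hx.2.trans hc.2⟩ hc hx.2
  · exact hfc ▸ hanti hc ⟨hc.1.trans hx.1, hx.2⟩ hx.1

lemma self_le_arcsin {x : ℝ} (h0 : 0 ≤ x) (h1 : x ≤ 1) : x ≤ arcsin x := by
  rw [le_arcsin_iff_sin_le ⟨by linarith [pi_gt_three], by linarith [pi_gt_three]⟩
    ⟨by linarith, h1⟩]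
  exact sin_le h0

lemma hasDerivAt_sqrt_one_sub_sq {x : ℝ} (hx : x ^ 2 < 1) :
    HasDerivAt (fun y : ℝ ↦ √(1 - y ^ 2)) (-x / √(1 - x ^ 2)) x := by
  convert ((hasDerivAt_pow 2 x).const_sub 1).sqrt (by linarith) using 1
  field_simp
  ring

namespace KeyIneq

noncomputable def g (s : ℝ) : ℝ :=
  (3 * s ^ 2 - 1) * arcsin s + s * (1 + s ^ 2) * √(1 - s ^ 2) - π * s ^ 3

noncomputable def h (u : ℝ) : ℝ :=
  6 * arcsin u + 4 * u * √(1 - u ^ 2) - 3 * π * u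

lemma continuous_g : Continuous g := by unfold g; fun_prop

lemma continuous_h : Continuous h := by unfold h; fun_prop

lemma hasDerivAt_h {u : ℝ} (hu : u ^ 2 < 1) :
    HasDerivAt h ((10 - 8 * u ^ 2) / √(1 - u ^ 2) - 3 * π) u := by
  have hpos : 0 < √(1 - u ^ 2) := sqrt_pos.2 (by linarith)
  have hsq : √(1 - u ^ 2) ^ 2 = 1 - u ^ 2 := sq_sqrt (by linarith)
  have harcsin := hasDerivAt_arcsin (x := u) (by nlinarith) (by nlinarith)
  have := ((harcsin.const_mul 6).add
    (((hasDerivAt_id u).const_mul 4).mul (hasDerivAt_sqrt_one_sub_sq hu))).sub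
    ((hasDerivAt_id u).const_mul (3 * π))
  refine this.congr_deriv ?_
  simp only [id]
  field_simp
  linear_combination 4 * hsq

lemma hasDerivAt_g {s : ℝ} (hs : s ^ 2 < 1) : HasDerivAt g (s * h s) s := by
  have hpos : 0 < √(1 - s ^ 2) := sqrt_pos.2 (by linarith)
  have hsq : √(1 - s ^ 2) ^ 2 = 1 - s ^ 2 := sq_sqrt (by linarith)
  have harcsin := hasDerivAt_arcsin (x := s) (by nlinarith) (by nlinarith)
  have := (((((hasDerivAt_pow 2 s).const_mul 3).sub_const 1).mul harcsin).add
    (((hasDerivAt_id s).mul ((hasDerivAt_pow 2 s).const_add 1)).mul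
      (hasDerivAt_sqrt_one_sub_sq hs))).sub ((hasDerivAt_pow 3 s).const_mul π)
  refine this.congr_deriv ?_
  simp only [h, id, Pi.mul_apply, Nat.cast_ofNat]
  field_simp
  linear_combination (1 - s ^ 2) * hsq

lemma h_nonneg_of_le_half {u : ℝ} (h0 : 0 ≤ u) (h1 : u ≤ 1 / 2) : 0 ≤ h u := by
  have harcsin := self_le_arcsin h0 (by linarith)
  have hsqrt : (0.866 : ℝ) ≤ √(1 - u ^ 2) := le_sqrt_of_sq_le (by nlinarith)
  have hπ := pi_lt_d4
  unfold h
  nlinarith [mul_le_mul_of_nonneg_left hsqrt h0]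

lemma h_nonpos_of_nine_tenths_le {u : ℝ} (h0 : 9 / 10 ≤ u) (h1 : u < 1) : h u ≤ 0 := by
  set c := √(1 - u ^ 2)
  have hc : 0 < c := sqrt_pos.2 (by nlinarith)
  have hcsq : c ^ 2 = 1 - u ^ 2 := sq_sqrt (by nlinarith)
  have harcsin : arcsin u = π / 2 - arcsin c := by
    rw [← arccos_eq_arcsin (by linarith), arccos_eq_pi_div_two_sub_arcsin]
    ring
  have hc_le : c ≤ arcsin c := self_le_arcsin hc.le (by nlinarith)
  have hπ := pi_lt_d4
  have key : 3 * π * (1 - u) ≤ (6 - 4 * u) * c := by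
    refine le_of_sq_le_sq ?_ (by nlinarith)
    rw [mul_pow _ c, hcsq]
    have hπsq : π ^ 2 < 9.87 := by nlinarith [pi_pos]
    have : 9 * π ^ 2 * (1 - u) ≤ (1 + u) * (6 - 4 * u) ^ 2 := by
      nlinarith [mul_nonneg (sub_nonneg.2 h0) (sub_nonneg.2 h1.le)]
    nlinarith
  unfold h
  rw [harcsin]
  nlinarith

lemma h_antitoneOn : AntitoneOn h (Icc (1 / 2) (9 / 10)) := by
  refine antitoneOn_of_hasDerivWithinAt_nonpos
    (f' := fun u ↦ (10 - 8 * u ^ 2) / √(1 - u ^ 2) - 3 * π)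
    (convex_Icc _ _) continuous_h.continuousOn (fun u hu ↦ ?_) (fun u hu ↦ ?_)
  · rw [interior_Icc] at hu
    exact (hasDerivAt_h (by nlinarith [hu.1, hu.2])).hasDerivWithinAt
  · rw [interior_Icc] at hu
    obtain ⟨hu0, hu1⟩ := hu
    have hpos : 0 < √(1 - u ^ 2) := sqrt_pos.2 (by nlinarith)
    have hsq : √(1 - u ^ 2) ^ 2 = 1 - u ^ 2 := sq_sqrt (by nlinarith)
    have hπ := pi_gt_d4
    have hnum : 10 - 8 * u ^ 2 ≤ 3 * π * √(1 - u ^ 2) := by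
      refine le_of_sq_le_sq ?_ (by positivity)
      rw [mul_pow, hsq]
      have hπsq : 9.869 < π ^ 2 := by nlinarith
      nlinarith [mul_nonneg (sub_nonneg.2 hu0.le) (sub_nonneg.2 hu1.le)]
    rw [sub_nonpos, div_le_iff₀ hpos]
    exact hnum

lemma exists_h_sign_change :
    ∃ c ∈ Icc (0 : ℝ) 1, (∀ u ∈ Ioo 0 c, 0 ≤ h u) ∧ ∀ u ∈ Ioo c 1, h u ≤ 0 := by
  obtain ⟨c, hc, hleft, hright⟩ := exists_sign_change_of_antitoneOn (by norm_num)
    continuous_h.continuousOn h_antitoneOn (h_nonneg_of_le_half (by norm_num) le_rfl)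
    (h_nonpos_of_nine_tenths_le le_rfl (by norm_num))
  refine ⟨c, ⟨by linarith [hc.1], by linarith [hc.2]⟩, fun u hu ↦ ?_, fun u hu ↦ ?_⟩
  · rcases le_or_gt u (1 / 2) with hu' | hu'
    · exact h_nonneg_of_le_half hu.1.le hu'
    · exact hleft u ⟨hu'.le, hu.2.le⟩
  · rcases le_or_gt (9 / 10) u with hu' | hu'
    · exact h_nonpos_of_nine_tenths_le hu' hu.2
    · exact hright u ⟨hu.1.le, hu'.le⟩

lemma g_nonneg {s : ℝ} (hs : s ∈ Icc (0 : ℝ) 1) : 0 ≤ g s := by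
  obtain ⟨c, hc, hleft, hright⟩ := exists_h_sign_change
  have hg : min (g 0) (g 1) = 0 := by
    rw [show g 0 = 0 by simp [g], show g 1 = 0 by norm_num [g]; ring, min_self]
  refine hg ▸ min_le_of_hasDerivAt_nonneg_nonpos continuous_g.continuousOn
    (fun y hy ↦ hasDerivAt_g (by nlinarith [hy.1, hy.2])) hc
    (fun y hy ↦ mul_nonneg hy.1.le (hleft y hy))
    (fun y hy ↦ mul_nonpos_of_nonneg_of_nonpos (hc.1.trans hy.1.le) (hright y hy)) hs

lemma g_sqrt_one_sub {t : ℝ} (ht : t < 1) :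
    g √(1 - t) = √(1 - t) * ((2 - 3 * t) * arcsin √(1 - t) / √(1 - t) + (2 - t) * √t
      - π * (1 - t)) := by
  have hs : 0 < √(1 - t) := sqrt_pos.2 (by linarith)
  have hs2 : √(1 - t) ^ 2 = 1 - t := sq_sqrt (by linarith)
  rw [g, hs2, sub_sub_cancel]
  field_simp
  linear_combination (-π * √(1 - t)) * hs2

end KeyIneq

theorem key_ineq (t : ℝ) (ht : t ∈ Set.Ioo (0:ℝ) 1) :
    t ^ (-(3/2) : ℝ) * (1 - t) ^ (-(1/2) : ℝ) *
        ((2 - 3 * t) * Real.arcsin (Real.sqrt (1 - t)) / Real.sqrt (1 - t) +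
          (2 - t) * Real.sqrt t - π * (1 - t)) ≥ 0 ∧
    (2 - 3 * t) * Real.arcsin (Real.sqrt (1 - t)) / Real.sqrt (1 - t) +
        (2 - t) * Real.sqrt t - π * (1 - t) ≥ 0 := by
  obtain ⟨ht0, ht1⟩ := ht
  set s := √(1 - t)
  have hs : 0 < s := sqrt_pos.2 (by linarith)
  have hE : 0 ≤ (2 - 3 * t) * arcsin s / s + (2 - t) * √t - π * (1 - t) :=
    nonneg_of_mul_nonneg_right (KeyIneq.g_sqrt_one_sub ht1 ▸
      KeyIneq.g_nonneg ⟨hs.le, sqrt_le_one.2 (by linarith)⟩) hs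
  exact ⟨mul_nonneg (by positivity) hE, hE⟩
end

section
/- Let A(s) = (460 - 120π + 51s + 27s²)/120 and g₁(s) = A(s)²(1-s) - (1+s-A(s))². Then g₁(s) > 0 for all s ∈ [1/3, 2/3]. -/
open Real

noncomputable def A (s : ℝ) : ℝ := (460 - 120 * π + 51 * s + 27 * s ^ 2) / 120

/-!
As a function of `a`, `a ^ 2 * (1 - s) - (1 + s - a) ^ 2` is a concave quadratic whose vertex
`(1 + s) / s` lies far to the right of `A s`, and `A s` decreases in `π`. Replacing `π` by the
upper bound `3.1416` therefore only lowers the expression, leaving a polynomial in `s` that is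
positive on `[1/3, 2/3]` with margin about `0.035` (attained at `s = 2/3`).
-/

/-- The expression `g₁` of the paper, with `A s` replaced by a free value `a`. -/
def gap (s a : ℝ) : ℝ := a ^ 2 * (1 - s) - (1 + s - a) ^ 2

theorem gap_sub_gap (s a b : ℝ) :
    gap s b - gap s a = (b - a) * (2 * (1 + s) - s * (a + b)) := by
  unfold gap; ring

theorem gap_le_gap {s a b : ℝ} (hs : 0 ≤ s) (hab : a ≤ b) (hb : s * b ≤ 1 + s) :
    gap s a ≤ gap s b := by
  have : 0 ≤ (b - a) * (2 * (1 + s) - s * (a + b)) :=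
    mul_nonneg (sub_nonneg.2 hab) (by nlinarith)
  linarith [gap_sub_gap s a b]

noncomputable def APi (c s : ℝ) : ℝ := (460 - 120 * c + 51 * s + 27 * s ^ 2) / 120

theorem APi_le_APi {c d : ℝ} (hcd : c ≤ d) (s : ℝ) : APi d s ≤ APi c s := by
  unfold APi; linarith

theorem mul_A_le {s : ℝ} (hs₀ : 0 ≤ s) (hs₁ : s ≤ 1) : s * A s ≤ 1 + s := by
  have hA : A s ≤ 3 / 2 := by
    unfold A; nlinarith [pi_gt_three]
  nlinarith

theorem gap_APi_pos {s : ℝ} (h₁ : 1 / 3 ≤ s) (h₂ : s ≤ 2 / 3) :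
    0 < gap s (APi 3.1416 s) := by
  unfold gap APi
  nlinarith [mul_nonneg (sub_nonneg.2 h₁) (sub_nonneg.2 h₂),
    mul_nonneg (mul_nonneg (sub_nonneg.2 h₁) (sub_nonneg.2 h₂)) (sub_nonneg.2 h₂),
    sq_nonneg (s - 2 / 3)]

theorem g1_pos (s : ℝ) (hs : s ∈ Set.Icc (1/3 : ℝ) (2/3)) :
    A s ^ 2 * (1 - s) - (1 + s - A s) ^ 2 > 0 := by
  obtain ⟨h₁, h₂⟩ := hs
  have hs₀ : 0 ≤ s := by linarith
  calc A s ^ 2 * (1 - s) - (1 + s - A s) ^ 2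
      = gap s (A s) := rfl
    _ ≥ gap s (APi 3.1416 s) :=
      gap_le_gap hs₀ (APi_le_APi pi_lt_d4.le s) (mul_A_le hs₀ (by linarith))
    _ > 0 := gap_APi_pos h₁ h₂
end
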